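/- arXiv:2302.09694 — 4 statements merged into one kernel-verified Lean document; each statement's English description precedes it below -/
import Mathlib

section
/- Suppose that for every t, t' ∈ {0,1}, every w with P(W=w) > 0 and every m ∈ 𝕄, E[Y(t,m)·1{M(t')=m} | W=w] = E[Y(t,m) | W=w] · P(M(t')=m | W=w). Then NDE = ∑_{w : P(W=w)>0} ∑_{m ∈ 𝕄} (E[Y(1,m) | W=w] − E[Y(0,m) | W=w]) · P(M(0)=m | W=w) · P(W=w). -/
open Finset
open scoped Classical

/-- Probability of an event `A` under the finite distribution `p`. -/
noncomputable def Pr {Ω : Type*} [Fintype Ω] (p : Ω → ℝ) (A : Ω → Prop) : ℝ :=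
  ∑ ω, if A ω then p ω else 0

/-- Expectation of a random variable `V` under the finite distribution `p`. -/
noncomputable def Ex {Ω : Type*} [Fintype Ω] (p : Ω → ℝ) (V : Ω → ℝ) : ℝ :=
  ∑ ω, p ω * V ω

/-- Conditional probability `P(A | B) = P(A ∩ B) / P(B)`. -/
noncomputable def PrCond {Ω : Type*} [Fintype Ω] (p : Ω → ℝ) (A B : Ω → Prop) : ℝ :=
  Pr p (fun ω => A ω ∧ B ω) / Pr p B

/-- Conditional expectation `E[V | B] = E[V·1_B] / P(B)`. -/
noncomputable def ExCond {Ω : Type*} [Fintype Ω] (p : Ω → ℝ) (V : Ω → ℝ) (B : Ω → Prop) : ℝ :=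
  Ex p (fun ω => V ω * (if B ω then 1 else 0)) / Pr p B

lemma Pr_nonneg {Ω : Type*} [Fintype Ω] (p : Ω → ℝ) (hp : ∀ ω, 0 ≤ p ω) (A : Ω → Prop) :
    0 ≤ Pr p A := by
  refine Finset.sum_nonneg fun ω _ => ?_
  split <;> simp [hp ω]

lemma key {Ω 𝕄 𝕎 : Type*} [Fintype Ω] [Fintype 𝕄] [Fintype 𝕎]
    (p : Ω → ℝ) (hp : ∀ ω, 0 ≤ p ω)
    (M0 : Ω → 𝕄) (f : 𝕄 → Ω → ℝ) (W : Ω → 𝕎)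
    (hCI : ∀ w : 𝕎, 0 < Pr p (fun ω => W ω = w) → ∀ m : 𝕄,
      ExCond p (fun ω => f m ω * (if M0 ω = m then 1 else 0)) (fun ω => W ω = w) =
        ExCond p (fun ω => f m ω) (fun ω => W ω = w) *
          PrCond p (fun ω => M0 ω = m) (fun ω => W ω = w)) :
    Ex p (fun ω => f (M0 ω) ω) =
      ∑ w ∈ Finset.univ.filter (fun w : 𝕎 => 0 < Pr p (fun ω => W ω = w)),
        ∑ m : 𝕄, ExCond p (fun ω => f m ω) (fun ω => W ω = w) *
          PrCond p (fun ω => M0 ω = m) (fun ω => W ω = w) * Pr p (fun ω => W ω = w) := by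
  have hzero : ∀ w : 𝕎, Pr p (fun ω => W ω = w) = 0 → ∀ ω : Ω, W ω = w → p ω = 0 := by
    intro w hw ω hω
    have h := (Finset.sum_eq_zero_iff_of_nonneg
      (fun ω _ => by dsimp only; split <;> simp [hp ω])).mp hw ω (Finset.mem_univ ω)
    simpa [hω] using h
  have step1 : ∀ w ∈ Finset.univ.filter (fun w : 𝕎 => 0 < Pr p (fun ω => W ω = w)),
      (∑ m : 𝕄, ExCond p (fun ω => f m ω) (fun ω => W ω = w) *
          PrCond p (fun ω => M0 ω = m) (fun ω => W ω = w) * Pr p (fun ω => W ω = w)) =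
      ∑ m : 𝕄, Ex p (fun ω => f m ω * (if M0 ω = m then 1 else 0) *
          (if W ω = w then 1 else 0)) := by
    intro w hw
    rw [Finset.mem_filter] at hw
    refine Finset.sum_congr rfl fun m _ => ?_
    rw [← hCI w hw.2 m, ExCond, div_mul_cancel₀]
    exact ne_of_gt hw.2
  rw [Finset.sum_congr rfl step1]
  rw [Finset.sum_filter]
  have step2 : ∀ w : 𝕎,
      (if 0 < Pr p (fun ω => W ω = w) then
        ∑ m : 𝕄, Ex p (fun ω => f m ω * (if M0 ω = m then 1 else 0) *
          (if W ω = w then 1 else 0)) else 0) =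
      ∑ m : 𝕄, Ex p (fun ω => f m ω * (if M0 ω = m then 1 else 0) *
          (if W ω = w then 1 else 0)) := by
    intro w
    split
    · rfl
    · rename_i h
      have hPr0 : Pr p (fun ω => W ω = w) = 0 :=
        le_antisymm (not_lt.mp h) (Pr_nonneg p hp _)
      symm
      refine Finset.sum_eq_zero fun m _ => ?_
      refine Finset.sum_eq_zero fun ω _ => ?_
      by_cases hω : W ω = w
      · simp [hzero w hPr0 ω hω]
      · simp [hω]
  rw [Finset.sum_congr rfl fun w _ => step2 w]
  unfold Ex
  symm
  rw [Finset.sum_congr rfl fun w _ => Finset.sum_comm, Finset.sum_comm]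
  refine Finset.sum_congr rfl fun ω _ => ?_
  rw [Finset.sum_comm]
  have hsum : ∀ m : 𝕄, (∑ w : 𝕎, p ω * (f m ω * (if M0 ω = m then 1 else 0) *
      (if W ω = w then 1 else 0))) =
      p ω * (f m ω * (if M0 ω = m then 1 else 0)) := by
    intro m
    simp [mul_ite, mul_one, mul_zero, Finset.sum_ite_eq]
  rw [Finset.sum_congr rfl fun m _ => hsum m]
  simp only [mul_ite, mul_one, mul_zero]
  rw [Finset.sum_ite_eq]
  simp

/-- under cross-world conditional independence given `W`,
`NDE = E[Y(1,M(0)) − Y(0,M(0))]` equals the mediation adjustment formula. -/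
theorem stmt2 {Ω 𝕄 𝕎 : Type*} [Fintype Ω] [Fintype 𝕄] [Fintype 𝕎]
    (p : Ω → ℝ) (hp : ∀ ω, 0 ≤ p ω) (hp1 : ∑ ω, p ω = 1)
    (T : Ω → Fin 2) (M : Fin 2 → Ω → 𝕄) (Y : Fin 2 → 𝕄 → Ω → ℝ)
    (W : Ω → 𝕎)
    (hCI : ∀ t t' : Fin 2, ∀ w : 𝕎, 0 < Pr p (fun ω => W ω = w) → ∀ m : 𝕄,
      ExCond p (fun ω => Y t m ω * (if M t' ω = m then 1 else 0)) (fun ω => W ω = w) =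
        ExCond p (fun ω => Y t m ω) (fun ω => W ω = w) *
          PrCond p (fun ω => M t' ω = m) (fun ω => W ω = w)) :
    Ex p (fun ω => Y 1 (M 0 ω) ω - Y 0 (M 0 ω) ω) =
      ∑ w ∈ Finset.univ.filter (fun w : 𝕎 => 0 < Pr p (fun ω => W ω = w)),
        ∑ m : 𝕄,
          (ExCond p (fun ω => Y 1 m ω) (fun ω => W ω = w) -
              ExCond p (fun ω => Y 0 m ω) (fun ω => W ω = w)) *
            PrCond p (fun ω => M 0 ω = m) (fun ω => W ω = w) *
              Pr p (fun ω => W ω = w) := by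
  have h1 := key p hp (M 0) (fun m ω => Y 1 m ω) W (fun w hw m => hCI 1 0 w hw m)
  have h0 := key p hp (M 0) (fun m ω => Y 0 m ω) W (fun w hw m => hCI 0 0 w hw m)
  have hEx : Ex p (fun ω => Y 1 (M 0 ω) ω - Y 0 (M 0 ω) ω) =
      Ex p (fun ω => Y 1 (M 0 ω) ω) - Ex p (fun ω => Y 0 (M 0 ω) ω) := by
    unfold Ex
    rw [← Finset.sum_sub_distrib]
    exact Finset.sum_congr rfl fun ω _ => by ring
  rw [hEx, h1, h0, ← Finset.sum_sub_distrib]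
  refine Finset.sum_congr rfl fun w _ => ?_
  rw [← Finset.sum_sub_distrib]
  exact Finset.sum_congr rfl fun m _ => by ring
end

section
/- Suppose that for every t, t' ∈ {0,1}, every w with P(W=w) > 0 and every m ∈ 𝕄, E[Y(t,m)·1{M(t')=m} | W=w] = E[Y(t,m) | W=w] · P(M(t')=m | W=w). Then NIE_r = ∑_{w : P(W=w)>0} ∑_{m ∈ 𝕄} E[Y(1,m) | W=w] · (P(M(0)=m | W=w) − P(M(1)=m | W=w)) · P(W=w). -/
open Finset
open scoped Classical

section aux
variable {Ω : Type*} [Fintype Ω]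

lemma Ex_sub (p f g : Ω → ℝ) :
    Ex p (fun ω => f ω - g ω) = Ex p f - Ex p g := by
  simp [Ex, mul_sub, Finset.sum_sub_distrib]

lemma Ex_sum {ι : Type*} [Fintype ι] (p : Ω → ℝ) (g : ι → Ω → ℝ) :
    Ex p (fun ω => ∑ i, g i ω) = ∑ i, Ex p (g i) := by
  simp only [Ex, Finset.mul_sum]
  exact Finset.sum_comm

lemma ExCond_sub (p f g : Ω → ℝ) (B : Ω → Prop) :
    ExCond p (fun ω => f ω - g ω) B = ExCond p f B - ExCond p g B := by
  simp only [ExCond]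
  rw [← sub_div]
  congr 1
  rw [← Ex_sub]
  simp only [Ex]
  exact Finset.sum_congr rfl (fun ω _ => by ring)

lemma ExCond_sum {ι : Type*} [Fintype ι] (p : Ω → ℝ) (g : ι → Ω → ℝ) (B : Ω → Prop) :
    ExCond p (fun ω => ∑ i, g i ω) B = ∑ i, ExCond p (g i) B := by
  simp only [ExCond]
  rw [← Finset.sum_div]
  congr 1
  rw [← Ex_sum]
  simp only [Ex]
  exact Finset.sum_congr rfl (fun ω _ => by rw [Finset.sum_mul])

lemma Ex_total {𝕎 : Type*} [Fintype 𝕎] (p : Ω → ℝ) (hp : ∀ ω, 0 ≤ p ω)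
    (W : Ω → 𝕎) (V : Ω → ℝ) :
    Ex p V = ∑ w ∈ Finset.univ.filter (fun w : 𝕎 => 0 < Pr p (fun ω => W ω = w)),
      ExCond p V (fun ω => W ω = w) * Pr p (fun ω => W ω = w) := by
  classical
  have h1 : ∀ w ∈ Finset.univ.filter (fun w : 𝕎 => 0 < Pr p (fun ω => W ω = w)),
      ExCond p V (fun ω => W ω = w) * Pr p (fun ω => W ω = w)
        = Ex p (fun ω => V ω * if W ω = w then 1 else 0) := by
    intro w hw
    rw [Finset.mem_filter] at hw
    exact div_mul_cancel₀ _ (ne_of_gt hw.2)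
  rw [Finset.sum_congr rfl h1, Finset.sum_filter]
  have h2 : ∀ w : 𝕎, (if 0 < Pr p (fun ω => W ω = w)
      then Ex p (fun ω => V ω * if W ω = w then 1 else 0) else 0)
        = Ex p (fun ω => V ω * if W ω = w then 1 else 0) := by
    intro w
    split_ifs with h
    · rfl
    · have hPr : Pr p (fun ω => W ω = w) = 0 := by
        have hnn : 0 ≤ Pr p (fun ω => W ω = w) := by
          apply Finset.sum_nonneg; intro ω _; split_ifs <;> simp [hp ω]
        linarith [not_lt.mp h]
      symm
      apply Finset.sum_eq_zero
      intro ω _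
      by_cases hω : W ω = w
      · have hpω : p ω = 0 := by
          have := (Finset.sum_eq_zero_iff_of_nonneg (by
            intro x _; split_ifs <;> simp [hp x])).mp hPr ω (Finset.mem_univ ω)
          simpa [hω] using this
        simp [hpω]
      · simp [hω]
  rw [Finset.sum_congr rfl (fun w _ => h2 w)]
  unfold Ex
  rw [Finset.sum_comm]
  apply Finset.sum_congr rfl
  intro ω _
  simp [mul_ite]

end aux

/-- under cross-world conditional independence given `W`,
`NIE_r = E[Y(1,M(0)) − Y(1,M(1))]` equals the mediation adjustment formula. -/
theorem stmt3 {Ω 𝕄 𝕎 : Type*} [Fintype Ω] [Fintype 𝕄] [Fintype 𝕎]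
    (p : Ω → ℝ) (hp : ∀ ω, 0 ≤ p ω) (hp1 : ∑ ω, p ω = 1)
    (T : Ω → Fin 2) (M : Fin 2 → Ω → 𝕄) (Y : Fin 2 → 𝕄 → Ω → ℝ)
    (W : Ω → 𝕎)
    (hCI : ∀ t t' : Fin 2, ∀ w : 𝕎, 0 < Pr p (fun ω => W ω = w) → ∀ m : 𝕄,
      ExCond p (fun ω => Y t m ω * (if M t' ω = m then 1 else 0)) (fun ω => W ω = w) =
        ExCond p (fun ω => Y t m ω) (fun ω => W ω = w) *
          PrCond p (fun ω => M t' ω = m) (fun ω => W ω = w)) :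
    Ex p (fun ω => Y 1 (M 0 ω) ω - Y 1 (M 1 ω) ω) =
      ∑ w ∈ Finset.univ.filter (fun w : 𝕎 => 0 < Pr p (fun ω => W ω = w)),
        ∑ m : 𝕄,
          ExCond p (fun ω => Y 1 m ω) (fun ω => W ω = w) *
            (PrCond p (fun ω => M 0 ω = m) (fun ω => W ω = w) -
              PrCond p (fun ω => M 1 ω = m) (fun ω => W ω = w)) *
              Pr p (fun ω => W ω = w) := by
  rw [Ex_total p hp W]
  apply Finset.sum_congr rfl
  intro w hw
  rw [Finset.mem_filter] at hw
  rw [ExCond_sub]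
  have hexp : ∀ t : Fin 2, ExCond p (fun ω => Y 1 (M t ω) ω) (fun ω => W ω = w)
      = ∑ m, ExCond p (fun ω => Y 1 m ω) (fun ω => W ω = w) *
          PrCond p (fun ω => M t ω = m) (fun ω => W ω = w) := by
    intro t
    have hrw : (fun ω => Y 1 (M t ω) ω)
        = fun ω => ∑ m, Y 1 m ω * (if M t ω = m then 1 else 0) := by
      funext ω
      simp [mul_ite]
    rw [hrw, ExCond_sum]
    exact Finset.sum_congr rfl (fun m _ => hCI 1 t w hw.2 m)
  rw [hexp 0, hexp 1, ← Finset.sum_sub_distrib, Finset.sum_mul]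
  apply Finset.sum_congr rfl
  intro m _
  ring
end

section
/- Fix t ∈ {0,1}. Assume: (positivity) P(T=t, Z_TM=u, Z_MY=s) > 0 for all u ∈ U, s ∈ S with P(Z_TM=u, Z_MY=s) > 0; and (conditional ignorability of the mediator) for all m ∈ 𝕄 and all u, s with P(Z_TM=u, Z_MY=s) > 0, P(M(t)=m, T=t | Z_TM=u, Z_MY=s) = P(M(t)=m | Z_TM=u, Z_MY=s) · P(T=t | Z_TM=u, Z_MY=s). Then for every s with P(Z_MY=s) > 0 and every m ∈ 𝕄: P(M(t)=m | Z_MY=s) = ∑_{u : P(Z_TM=u, Z_MY=s)>0} P(M=m | T=t, Z_TM=u, Z_MY=s) · P(Z_TM=u | Z_MY=s). (Back-door adjustment of the T→M relationship by Z_TM.) -/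
open Finset
open scoped Classical

lemma Pr_mono {Ω : Type*} [Fintype Ω] (p : Ω → ℝ) (hp : ∀ ω, 0 ≤ p ω) {A B : Ω → Prop}
    (h : ∀ ω, A ω → B ω) : Pr p A ≤ Pr p B := by
  apply Finset.sum_le_sum; intro ω _
  split_ifs with h1 h2
  · exact le_refl _
  · exact absurd (h ω h1) h2
  · exact hp ω
  · exact le_refl _

lemma Pr_congr {Ω : Type*} [Fintype Ω] (p : Ω → ℝ) {A B : Ω → Prop}
    (h : ∀ ω, A ω ↔ B ω) : Pr p A = Pr p B := by
  apply Finset.sum_congr rfl; intro ω _; simp [h ω]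

lemma Pr_partition {Ω U : Type*} [Fintype Ω] [Fintype U] (p : Ω → ℝ) (A : Ω → Prop) (Z : Ω → U) :
    Pr p A = ∑ u, Pr p (fun ω => A ω ∧ Z ω = u) := by
  unfold Pr
  rw [Finset.sum_comm]
  apply Finset.sum_congr rfl
  intro ω _
  by_cases hA : A ω <;> simp [hA]

/-- back-door adjustment of the `T → M` relationship by `Z_TM`,
conditioning on `Z_MY`. -/
theorem stmt4 {Ω 𝕄 U V S : Type*} [Fintype Ω] [Fintype 𝕄] [Fintype U] [Fintype V] [Fintype S]
    (p : Ω → ℝ) (hp : ∀ ω, 0 ≤ p ω) (hp1 : ∑ ω, p ω = 1)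
    (T : Ω → Fin 2) (M : Fin 2 → Ω → 𝕄) (Y : Fin 2 → 𝕄 → Ω → ℝ)
    (ZTM : Ω → U) (ZTY : Ω → V) (ZMY : Ω → S) (t : Fin 2)
    (hpos : ∀ (u : U) (s : S), 0 < Pr p (fun ω => ZTM ω = u ∧ ZMY ω = s) →
      0 < Pr p (fun ω => T ω = t ∧ ZTM ω = u ∧ ZMY ω = s))
    (hign : ∀ (m : 𝕄) (u : U) (s : S), 0 < Pr p (fun ω => ZTM ω = u ∧ ZMY ω = s) →
      PrCond p (fun ω => M t ω = m ∧ T ω = t) (fun ω => ZTM ω = u ∧ ZMY ω = s) =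
        PrCond p (fun ω => M t ω = m) (fun ω => ZTM ω = u ∧ ZMY ω = s) *
          PrCond p (fun ω => T ω = t) (fun ω => ZTM ω = u ∧ ZMY ω = s)) :
    ∀ s : S, 0 < Pr p (fun ω => ZMY ω = s) → ∀ m : 𝕄,
      PrCond p (fun ω => M t ω = m) (fun ω => ZMY ω = s) =
        ∑ u ∈ Finset.univ.filter
            (fun u : U => 0 < Pr p (fun ω => ZTM ω = u ∧ ZMY ω = s)),
          PrCond p (fun ω => M (T ω) ω = m)
              (fun ω => T ω = t ∧ ZTM ω = u ∧ ZMY ω = s) *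
            PrCond p (fun ω => ZTM ω = u) (fun ω => ZMY ω = s) := by
  intro s hs m
  unfold PrCond
  rw [Pr_partition p (fun ω => M t ω = m ∧ ZMY ω = s) ZTM, Finset.sum_div]
  rw [← Finset.sum_subset (Finset.filter_subset
      (fun u : U => 0 < Pr p (fun ω => ZTM ω = u ∧ ZMY ω = s)) Finset.univ)]
  · apply Finset.sum_congr rfl
    intro u hu
    rw [Finset.mem_filter] at hu
    have hd : 0 < Pr p (fun ω => ZTM ω = u ∧ ZMY ω = s) := hu.2
    have hc : 0 < Pr p (fun ω => T ω = t ∧ ZTM ω = u ∧ ZMY ω = s) := hpos u s hd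
    have h1 : Pr p (fun ω => M (T ω) ω = m ∧ T ω = t ∧ ZTM ω = u ∧ ZMY ω = s) =
        Pr p (fun ω => (M t ω = m ∧ T ω = t) ∧ ZTM ω = u ∧ ZMY ω = s) := by
      apply Pr_congr; intro ω
      constructor
      · rintro ⟨h1, h2, h3⟩; rw [h2] at h1; exact ⟨⟨h1, h2⟩, h3⟩
      · rintro ⟨⟨h1, h2⟩, h3⟩; rw [h2]; exact ⟨h1, rfl, h3⟩
    have h2 : Pr p (fun ω => (M t ω = m ∧ ZMY ω = s) ∧ ZTM ω = u) =
        Pr p (fun ω => M t ω = m ∧ ZTM ω = u ∧ ZMY ω = s) := by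
      apply Pr_congr; intro ω; tauto
    have key := hign m u s hd
    unfold PrCond at key
    set a := Pr p (fun ω => (M t ω = m ∧ T ω = t) ∧ ZTM ω = u ∧ ZMY ω = s) with ha
    set b := Pr p (fun ω => M t ω = m ∧ ZTM ω = u ∧ ZMY ω = s) with hb
    set c := Pr p (fun ω => (T ω = t) ∧ ZTM ω = u ∧ ZMY ω = s) with hc'
    set d := Pr p (fun ω => ZTM ω = u ∧ ZMY ω = s) with hd'
    set e := Pr p (fun ω => ZMY ω = s) with he'
    have hcpos : 0 < c := by
      rw [hc']; exact hc
    have hkey : a * d = b * c := by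
      field_simp at key
      nlinarith [key, hd]
    rw [h1, h2]
    have hce : c * e ≠ 0 := by positivity
    field_simp
    nlinarith [hkey, hs]
  · intro u _ hu
    rw [Finset.mem_filter] at hu
    push_neg at hu
    have hd0 : Pr p (fun ω => ZTM ω = u ∧ ZMY ω = s) = 0 :=
      le_antisymm (hu (Finset.mem_univ u)) (Pr_nonneg p hp _)
    have : Pr p (fun ω => (M t ω = m ∧ ZMY ω = s) ∧ ZTM ω = u) = 0 := by
      refine le_antisymm ?_ (Pr_nonneg p hp _)
      calc Pr p (fun ω => (M t ω = m ∧ ZMY ω = s) ∧ ZTM ω = u)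
          ≤ Pr p (fun ω => ZTM ω = u ∧ ZMY ω = s) := Pr_mono p hp (by tauto)
        _ = 0 := hd0
    rw [this, zero_div]
end

section
/- Assume: (positivity) P(T=t, M=m, Z=z) > 0 for every t ∈ {0,1}, m ∈ 𝕄 and every z with P(Z=z) > 0; and (iii) outcome ignorability: for all t, t' ∈ {0,1}, m, m' ∈ 𝕄, u ∈ U and v, s with P(Z_TY=v, Z_MY=s) > 0, E[Y(t,m)·1{T=t', M=m', Z_TM=u} | Z_TY=v, Z_MY=s] = E[Y(t,m) | Z_TY=v, Z_MY=s] · P(T=t', M=m', Z_TM=u | Z_TY=v, Z_MY=s). Then for every t ∈ {0,1}, m ∈ 𝕄 and z = (u,v,s) with P(Z=z) > 0: E[Y(t,m) | Z=z] = E[Y | T=t, M=m, Z_TY=v, Z_MY=s]. -/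
open Finset
open scoped Classical

set_option maxHeartbeats 1000000 in
/-- `E[Y(t,m) | Z=z] = E[Y | T=t, M=m, Z_TY=v, Z_MY=s]` under positivity
and outcome ignorability. -/
theorem stmt10 {Ω 𝕄 U V S : Type*}
    [Fintype Ω] [Fintype 𝕄] [Fintype U] [Fintype V] [Fintype S]
    (p : Ω → ℝ) (hp : ∀ ω, 0 ≤ p ω) (hp1 : ∑ ω, p ω = 1)
    (T : Ω → Fin 2) (M : Fin 2 → Ω → 𝕄) (Y : Fin 2 → 𝕄 → Ω → ℝ)
    (ZTM : Ω → U) (ZTY : Ω → V) (ZMY : Ω → S)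
    -- positivity
    (hpos : ∀ (t : Fin 2) (m : 𝕄) (z : U × V × S),
      0 < Pr p (fun ω => (ZTM ω, ZTY ω, ZMY ω) = z) →
      0 < Pr p (fun ω => T ω = t ∧ M (T ω) ω = m ∧ (ZTM ω, ZTY ω, ZMY ω) = z))
    -- (iii) outcome ignorability
    (hOut : ∀ (t t' : Fin 2) (m m' : 𝕄) (u : U) (v : V) (s : S),
      0 < Pr p (fun ω => ZTY ω = v ∧ ZMY ω = s) →
      ExCond p
          (fun ω => Y t m ω * (if T ω = t' ∧ M (T ω) ω = m' ∧ ZTM ω = u then 1 else 0))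
          (fun ω => ZTY ω = v ∧ ZMY ω = s) =
        ExCond p (fun ω => Y t m ω) (fun ω => ZTY ω = v ∧ ZMY ω = s) *
          PrCond p (fun ω => T ω = t' ∧ M (T ω) ω = m' ∧ ZTM ω = u)
            (fun ω => ZTY ω = v ∧ ZMY ω = s)) :
    ∀ (t : Fin 2) (m : 𝕄) (z : U × V × S),
      0 < Pr p (fun ω => (ZTM ω, ZTY ω, ZMY ω) = z) →
      ExCond p (fun ω => Y t m ω) (fun ω => (ZTM ω, ZTY ω, ZMY ω) = z) =
        ExCond p (fun ω => Y (T ω) (M (T ω) ω) ω)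
          (fun ω => T ω = t ∧ M (T ω) ω = m ∧ ZTY ω = z.2.1 ∧ ZMY ω = z.2.2) := by
  intro t m z hz
  obtain ⟨u, v, s⟩ := z
  dsimp only at hz ⊢
  -- monotonicity of Pr
  have Pr_mono : ∀ (A C : Ω → Prop), (∀ ω, A ω → C ω) → Pr p A ≤ Pr p C := by
    intro A C h
    refine Finset.sum_le_sum fun ω _ => ?_
    split_ifs with h1 h2
    · exact le_rfl
    · exact absurd (h ω h1) h2
    · exact hp ω
    · exact le_rfl
  have hB : 0 < Pr p (fun ω => ZTY ω = v ∧ ZMY ω = s) := by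
    refine lt_of_lt_of_le hz (Pr_mono _ _ ?_)
    intro ω h
    simp only [Prod.mk.injEq] at h
    exact ⟨h.2.1, h.2.2⟩
  have hBne : Pr p (fun ω => ZTY ω = v ∧ ZMY ω = s) ≠ 0 := ne_of_gt hB
  set c := ExCond p (fun ω => Y t m ω) (fun ω => ZTY ω = v ∧ ZMY ω = s) with hc
  -- key per-cell identity from ignorability
  have key : ∀ (t' : Fin 2) (m' : 𝕄) (u' : U),
      Ex p (fun ω => (Y t m ω * (if T ω = t' ∧ M (T ω) ω = m' ∧ ZTM ω = u' then 1 else 0)) *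
          @ite ℝ (ZTY ω = v ∧ ZMY ω = s) (Classical.propDecidable _) 1 0) =
        c * Pr p (fun ω => (T ω = t' ∧ M (T ω) ω = m' ∧ ZTM ω = u') ∧
          ZTY ω = v ∧ ZMY ω = s) := by
    intro t' m' u'
    have h := hOut t t' m m' u' v s hB
    rw [ExCond, PrCond, ← hc] at h
    rw [div_eq_iff hBne, mul_assoc, div_mul_cancel₀ _ hBne] at h
    exact h
  -- pointwise indicator sums
  have ptTM : ∀ (ω : Ω) (u' : U) (r : ℝ),
      (∑ t' : Fin 2, ∑ m' : 𝕄,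
        if T ω = t' ∧ M (T ω) ω = m' ∧ ZTM ω = u' then r else 0) =
      if ZTM ω = u' then r else 0 := by
    intro ω u' r
    by_cases hu : ZTM ω = u'
    · simp [hu, ite_and, Finset.sum_ite_eq]
    · have h3 : ∀ (t' : Fin 2) (m' : 𝕄),
          ¬(T ω = t' ∧ M (T ω) ω = m' ∧ ZTM ω = u') := fun t' m' hh => hu hh.2.2
      simp [hu, h3]
  have ptU : ∀ (ω : Ω) (r : ℝ),
      (∑ u' : U, if T ω = t ∧ M (T ω) ω = m ∧ ZTM ω = u' then r else 0) =
      if T ω = t ∧ M (T ω) ω = m then r else 0 := by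
    intro ω r
    by_cases h : T ω = t ∧ M (T ω) ω = m
    · obtain ⟨h1, h2⟩ := h
      subst h1
      simp [h2, Finset.sum_ite_eq]
    · have h3 : ∀ u' : U, ¬(T ω = t ∧ M (T ω) ω = m ∧ ZTM ω = u') :=
        fun u' hh => h ⟨hh.1, hh.2.1⟩
      simp [h, h3]
  -- sums of cell probabilities
  have hPrL : (∑ t' : Fin 2, ∑ m' : 𝕄, Pr p (fun ω => (T ω = t' ∧ M (T ω) ω = m' ∧ ZTM ω = u) ∧
        ZTY ω = v ∧ ZMY ω = s)) =
      Pr p (fun ω => (ZTM ω, ZTY ω, ZMY ω) = (u, v, s)) := by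
    simp only [Pr]
    conv_lhs => enter [2]; ext t'; rw [Finset.sum_comm]
    conv_lhs => rw [Finset.sum_comm]
    refine Finset.sum_congr rfl fun ω _ => ?_
    by_cases hb : ZTY ω = v ∧ ZMY ω = s
    · by_cases hu : ZTM ω = u
      · simp [Prod.mk.injEq, hu, hb.1, hb.2, ite_and, Finset.sum_ite_eq]
      · have h2 : ¬((ZTM ω, ZTY ω, ZMY ω) = (u, v, s)) := by
          simp only [Prod.mk.injEq]; exact fun hh => hu hh.1
        have h3 : ∀ (t' : Fin 2) (m' : 𝕄),
            ¬((T ω = t' ∧ M (T ω) ω = m' ∧ ZTM ω = u) ∧ ZTY ω = v ∧ ZMY ω = s) :=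
          fun t' m' hh => hu hh.1.2.2
        simp [h2, h3]
    · have h2 : ¬((ZTM ω, ZTY ω, ZMY ω) = (u, v, s)) := by
        simp only [Prod.mk.injEq]; exact fun hh => hb ⟨hh.2.1, hh.2.2⟩
      have h3 : ∀ (t' : Fin 2) (m' : 𝕄),
          ¬((T ω = t' ∧ M (T ω) ω = m' ∧ ZTM ω = u) ∧ ZTY ω = v ∧ ZMY ω = s) :=
        fun t' m' hh => hb hh.2
      simp [h2, h3]
  have hPrR : (∑ u' : U, Pr p (fun ω => (T ω = t ∧ M (T ω) ω = m ∧ ZTM ω = u') ∧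
        ZTY ω = v ∧ ZMY ω = s)) =
      Pr p (fun ω => T ω = t ∧ M (T ω) ω = m ∧ ZTY ω = v ∧ ZMY ω = s) := by
    simp only [Pr]
    conv_lhs => rw [Finset.sum_comm]
    refine Finset.sum_congr rfl fun ω _ => ?_
    by_cases hb : ZTY ω = v ∧ ZMY ω = s
    · by_cases htm : T ω = t ∧ M (T ω) ω = m
      · obtain ⟨h1, h2⟩ := htm
        subst h1
        simp [h2, hb.1, hb.2, Finset.sum_ite_eq]
      · have h2 : ¬(T ω = t ∧ M (T ω) ω = m ∧ ZTY ω = v ∧ ZMY ω = s) :=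
          fun hh => htm ⟨hh.1, hh.2.1⟩
        have h3 : ∀ u' : U,
            ¬((T ω = t ∧ M (T ω) ω = m ∧ ZTM ω = u') ∧ ZTY ω = v ∧ ZMY ω = s) :=
          fun u' hh => htm ⟨hh.1.1, hh.1.2.1⟩
        simp [h2, h3]
    · have h2 : ¬(T ω = t ∧ M (T ω) ω = m ∧ ZTY ω = v ∧ ZMY ω = s) :=
        fun hh => hb ⟨hh.2.2.1, hh.2.2.2⟩
      have h3 : ∀ u' : U,
          ¬((T ω = t ∧ M (T ω) ω = m ∧ ZTM ω = u') ∧ ZTY ω = v ∧ ZMY ω = s) :=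
        fun u' hh => hb hh.2
      simp [h2, h3]
  -- LHS numerator
  have hNumL : Ex p (fun ω => Y t m ω *
        @ite ℝ ((ZTM ω, ZTY ω, ZMY ω) = (u, v, s)) (Classical.propDecidable _) 1 0) =
      c * Pr p (fun ω => (ZTM ω, ZTY ω, ZMY ω) = (u, v, s)) := by
    have hsplit : ∀ ω : Ω, @ite ℝ ((ZTM ω, ZTY ω, ZMY ω) = (u, v, s)) (Classical.propDecidable _) 1 0 =
        (if ZTM ω = u then (1:ℝ) else 0) *
          @ite ℝ (ZTY ω = v ∧ ZMY ω = s) (Classical.propDecidable _) 1 0 := by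
      intro ω
      simp only [Prod.mk.injEq]
      by_cases h1 : ZTM ω = u <;> by_cases h2 : ZTY ω = v ∧ ZMY ω = s
      · rw [if_pos ⟨h1, h2.1, h2.2⟩, if_pos h1, if_pos h2, one_mul]
      · rw [if_neg (fun hh => h2 ⟨hh.2.1, hh.2.2⟩), if_pos h1, if_neg h2, mul_zero]
      · rw [if_neg (fun hh => h1 hh.1), if_neg h1, if_pos h2, zero_mul]
      · rw [if_neg (fun hh => h1 hh.1), if_neg h1, if_neg h2, mul_zero]
    have step1 : Ex p (fun ω => Y t m ω *
          @ite ℝ ((ZTM ω, ZTY ω, ZMY ω) = (u, v, s)) (Classical.propDecidable _) 1 0) =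
        ∑ t' : Fin 2, ∑ m' : 𝕄,
          Ex p (fun ω => (Y t m ω * (if T ω = t' ∧ M (T ω) ω = m' ∧ ZTM ω = u then 1 else 0)) *
            @ite ℝ (ZTY ω = v ∧ ZMY ω = s) (Classical.propDecidable _) 1 0) := by
      simp only [Ex]
      conv_rhs => enter [2]; ext t'; rw [Finset.sum_comm]
      conv_rhs => rw [Finset.sum_comm]
      refine Finset.sum_congr rfl fun ω _ => ?_
      rw [hsplit ω, ← ptTM ω u 1]
      simp only [Finset.sum_mul, Finset.mul_sum]
      exact Finset.sum_congr rfl fun t' _ => Finset.sum_congr rfl fun m' _ => by ring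
    rw [step1]
    simp only [key]
    simp only [← Finset.mul_sum]
    rw [hPrL]
  -- RHS numerator
  have hNumR : Ex p (fun ω => Y (T ω) (M (T ω) ω) ω *
        @ite ℝ (T ω = t ∧ M (T ω) ω = m ∧ ZTY ω = v ∧ ZMY ω = s)
          (Classical.propDecidable _) 1 0) =
      c * Pr p (fun ω => T ω = t ∧ M (T ω) ω = m ∧ ZTY ω = v ∧ ZMY ω = s) := by
    have hcons : ∀ ω : Ω, Y (T ω) (M (T ω) ω) ω *
          @ite ℝ (T ω = t ∧ M (T ω) ω = m ∧ ZTY ω = v ∧ ZMY ω = s)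
            (Classical.propDecidable _) 1 0 =
        Y t m ω * @ite ℝ (T ω = t ∧ M (T ω) ω = m ∧ ZTY ω = v ∧ ZMY ω = s)
            (Classical.propDecidable _) 1 0 := by
      intro ω
      by_cases h : T ω = t ∧ M (T ω) ω = m ∧ ZTY ω = v ∧ ZMY ω = s
      · rw [if_pos h, show Y (T ω) (M (T ω) ω) ω = Y t m ω from by rw [h.2.1, h.1]]
      · rw [if_neg h, mul_zero, mul_zero]
    have hsplit : ∀ ω : Ω, @ite ℝ (T ω = t ∧ M (T ω) ω = m ∧ ZTY ω = v ∧ ZMY ω = s)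
          (Classical.propDecidable _) 1 0 =
        (if T ω = t ∧ M (T ω) ω = m then (1:ℝ) else 0) *
          @ite ℝ (ZTY ω = v ∧ ZMY ω = s) (Classical.propDecidable _) 1 0 := by
      intro ω
      by_cases h1 : T ω = t ∧ M (T ω) ω = m <;> by_cases h2 : ZTY ω = v ∧ ZMY ω = s
      · rw [if_pos ⟨h1.1, h1.2, h2.1, h2.2⟩, if_pos h1, if_pos h2, one_mul]
      · rw [if_neg (fun hh => h2 ⟨hh.2.2.1, hh.2.2.2⟩), if_pos h1, if_neg h2, mul_zero]
      · rw [if_neg (fun hh => h1 ⟨hh.1, hh.2.1⟩), if_neg h1, if_pos h2, zero_mul]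
      · rw [if_neg (fun hh => h1 ⟨hh.1, hh.2.1⟩), if_neg h1, if_neg h2, mul_zero]
    have step1 : Ex p (fun ω => Y (T ω) (M (T ω) ω) ω *
          @ite ℝ (T ω = t ∧ M (T ω) ω = m ∧ ZTY ω = v ∧ ZMY ω = s)
            (Classical.propDecidable _) 1 0) =
        ∑ u' : U,
          Ex p (fun ω => (Y t m ω * (if T ω = t ∧ M (T ω) ω = m ∧ ZTM ω = u' then 1 else 0)) *
            @ite ℝ (ZTY ω = v ∧ ZMY ω = s) (Classical.propDecidable _) 1 0) := by
      simp only [Ex]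
      conv_rhs => rw [Finset.sum_comm]
      refine Finset.sum_congr rfl fun ω _ => ?_
      rw [hcons ω, hsplit ω, ← ptU ω 1]
      simp only [Finset.sum_mul, Finset.mul_sum]
      exact Finset.sum_congr rfl fun u' _ => by ring
    rw [step1]
    simp only [key]
    rw [← Finset.mul_sum, hPrR]
  -- positivity of RHS denominator
  have hR : 0 < Pr p (fun ω => T ω = t ∧ M (T ω) ω = m ∧ ZTY ω = v ∧ ZMY ω = s) := by
    refine lt_of_lt_of_le (hpos t m (u, v, s) hz) (Pr_mono _ _ ?_)
    intro ω h
    simp only [Prod.mk.injEq] at h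
    exact ⟨h.1, h.2.1, h.2.2.2.1, h.2.2.2.2⟩
  -- finish
  rw [ExCond, ExCond, hNumL, hNumR]
  rw [mul_div_assoc, div_self (ne_of_gt hz), mul_one]
  rw [mul_div_assoc, div_self (ne_of_gt hR), mul_one]
end
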